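/- arXiv:2302.11829 — 3 statements merged into one kernel-verified Lean document; each statement's English description precedes it below -/
import Mathlib

section
/- Suppose J ⊆ [n] and x* ∈ Δ_m satisfy u^L(x*,j) = M_J = M_{[n]} for all j ∈ J; suppose for every j ∈ [n] a vector ã_j ∈ ℝ^m is given such that either there exist γ_j > 0 and β_j ∈ ℝ with u^L(x,j) = γ_j·(ã_j·x) + β_j for all x ∈ Δ_m, or M_{{j}} = M_{[n]} and ã_j is the 0/1 indicator vector of I_j = argmax_{i∈[m]} u^L(i,j). Let k ∈ [n], y ∈ Δ_m, and define ũ^L(x,j) = ã_j·x − ã_j·x* for j ∈ J\{k}, ũ^L(x,k) = ã_k·x − ã_k·y, and ũ^L(x,j) = 1 for j ∉ J∪{k}. If u^L(y,k) ≥ M_{[n]}, then max_{x∈Δ_m} min_{j∈[n]} ũ^L(x,j) ≤ 0 = ũ^L(y,k); consequently (y,k) is inducible with respect to ũ^L. -/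
open scoped Classical
open Finset

noncomputable section

/-- The leader's mixed-strategy simplex Δ_m. -/
def simplex (m : ℕ) : Set (Fin m → ℝ) := stdSimplex ℝ (Fin m)

/-- Linear extension of a payoff matrix to mixed strategies: u(x,j) = ∑ i, x i * u i j. -/
def pay {m n : ℕ} (u : Fin m → Fin n → ℝ) (x : Fin m → ℝ) (j : Fin n) : ℝ :=
  ∑ i, x i * u i j

/-- Inner product on ℝ^m. -/
def dot {m : ℕ} (a x : Fin m → ℝ) : ℝ := ∑ i, a i * x i

/-- min_{j ∈ S} u(x, j). -/
def minOnS {m n : ℕ} (u : Fin m → Fin n → ℝ) (S : Set (Fin n)) (x : Fin m → ℝ) : ℝ :=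
  sInf ((fun j => pay u x j) '' S)

/-- The leader's maximin value M_S = max_{x∈Δ_m} min_{j∈S} u(x,j). -/
def Mval {m n : ℕ} (u : Fin m → Fin n → ℝ) (S : Set (Fin n)) : ℝ :=
  sSup (minOnS u S '' simplex m)

/-- The set 𝓜_S of maximin strategies. -/
def argMM {m n : ℕ} (u : Fin m → Fin n → ℝ) (S : Set (Fin n)) : Set (Fin m → ℝ) :=
  {x ∈ simplex m | minOnS u S x = Mval u S}

/-- The follower's best-response set BR(x) = argmax_j uF(x,j). -/
def BR {m n : ℕ} (uF : Fin m → Fin n → ℝ) (x : Fin m → ℝ) : Set (Fin n) :=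
  {j | ∀ j', pay uF x j' ≤ pay uF x j}

/-- Strong Stackelberg equilibrium of the game (uL, uF). -/
def SSE {m n : ℕ} (uL uF : Fin m → Fin n → ℝ) (x : Fin m → ℝ) (j : Fin n) : Prop :=
  x ∈ simplex m ∧ j ∈ BR uF x ∧
    ∀ x' ∈ simplex m, ∀ j' ∈ BR uF x', pay uL x' j' ≤ pay uL x j

/-- (x, j) is inducible with respect to the leader payoff uL. -/
def Inducible {m n : ℕ} (uL : Fin m → Fin n → ℝ) (x : Fin m → ℝ) (j : Fin n) : Prop :=
  ∃ uF : Fin m → Fin n → ℝ, SSE uL uF x j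

/-- μ is a (maximin-)cover of S w.r.t. uL: max_{x∈𝓜_S} max_{j∈BR(x)} uL(x,j) < M_S. -/
def IsCover {m n : ℕ} (uL μ : Fin m → Fin n → ℝ) (S : Set (Fin n)) : Prop :=
  ∀ x ∈ argMM uL S, ∀ j ∈ BR μ x, pay uL x j < Mval uL S

/-- μ is a proper cover of S w.r.t. uL. -/
def IsProperCover {m n : ℕ} (uL μ : Fin m → Fin n → ℝ) (S : Set (Fin n)) : Prop :=
  IsCover uL μ S ∧ ∀ x ∈ simplex m, ∀ j ∈ S, j ∉ BR μ x

/-- The surrogate leader payoff ũ^L built from a, J, k, x*, y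
(as a matrix; its linear extension to Δ_m gives exactly the formula in the paper). -/
def tuLdef {m n : ℕ} (a : Fin n → Fin m → ℝ) (J : Set (Fin n)) (k : Fin n)
    (xstar y : Fin m → ℝ) : Fin m → Fin n → ℝ :=
  fun i j =>
    if j = k then a k i - dot (a k) y
    else if j ∈ J then a j i - dot (a j) xstar
    else 1

/-!
For every leader strategy `x`, the column `j ∈ J` minimising `u^L(x, ·)` has
`u^L(x, j) ≤ M_J = M_[n]`, while the reference point (`y` if `j = k`, `x*` otherwise) earns at
least `M_[n]` against it. Both admissible choices of `ã_j` preserve this comparison: a positive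
affine rescaling trivially, the argmax indicator because a strategy earning
`M_{j} = max_i u^L(i, j)` is supported on the argmax. Hence `ũ^L(x, j) ≤ 0`.

By von Neumann's minimax theorem the follower then has a mixed strategy `q` holding the leader of
`ũ^L` to `≤ 0`. Pairing `k` with the supported column that is worst for the leader at `y` gives a
follower payoff for which `k` is a best response at `y` and no best response ever pays the
leader more than `0`.
-/

variable {m n : ℕ}

section Maximin

variable {u : Fin m → Fin n → ℝ} {S : Set (Fin n)} {x : Fin m → ℝ} {j : Fin n}

lemma continuous_pay (u : Fin m → Fin n → ℝ) (j : Fin n) : Continuous fun x => pay u x j := by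
  unfold pay
  fun_prop

lemma pay_single (u : Fin m → Fin n → ℝ) (i : Fin m) (j : Fin n) :
    pay u (Pi.single i 1) j = u i j := by
  simp [pay, Pi.single_apply]

lemma minOnS_le_pay (hj : j ∈ S) : minOnS u S x ≤ pay u x j :=
  csInf_le (Set.toFinite _).bddBelow ⟨j, hj, rfl⟩

lemma exists_pay_eq_minOnS (hS : S.Nonempty) : ∃ j ∈ S, pay u x j = minOnS u S x :=
  (hS.image _).csInf_mem (Set.toFinite _)

lemma minOnS_singleton : minOnS u {j} x = pay u x j := by
  simp [minOnS]

lemma bddAbove_minOnS_image (hS : S.Nonempty) : BddAbove (minOnS u S '' simplex m) := by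
  obtain ⟨j, hj⟩ := hS
  obtain ⟨b, hb⟩ := (isCompact_stdSimplex ℝ (Fin m)).bddAbove_image
    (continuous_pay u j).continuousOn
  exact ⟨b, by rintro _ ⟨x, hx, rfl⟩; exact (minOnS_le_pay hj).trans (hb ⟨x, hx, rfl⟩)⟩

lemma minOnS_le_Mval (hS : S.Nonempty) (hx : x ∈ simplex m) : minOnS u S x ≤ Mval u S :=
  le_csSup (bddAbove_minOnS_image hS) ⟨x, hx, rfl⟩

lemma exists_pay_le_Mval (hS : S.Nonempty) (hx : x ∈ simplex m) :
    ∃ j ∈ S, pay u x j ≤ Mval u S := by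
  obtain ⟨j, hj, hmin⟩ := exists_pay_eq_minOnS (u := u) (x := x) hS
  exact ⟨j, hj, hmin ▸ minOnS_le_Mval hS hx⟩

lemma le_Mval_singleton (i : Fin m) : u i j ≤ Mval u {j} := by
  simpa [minOnS_singleton, pay_single] using
    minOnS_le_Mval (u := u) (Set.singleton_nonempty j) (single_mem_stdSimplex ℝ i)

lemma Mval_le_of_forall_exists_pay_le {c : ℝ} (hm : (simplex m).Nonempty)
    (h : ∀ x ∈ simplex m, ∃ j ∈ S, pay u x j ≤ c) : Mval u S ≤ c := by
  refine csSup_le (hm.image _) ?_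
  rintro _ ⟨x, hx, rfl⟩
  obtain ⟨j, hj, hjc⟩ := h x hx
  exact (minOnS_le_pay hj).trans hjc

end Maximin

section Surrogate

def argmaxIndicator (u : Fin m → Fin n → ℝ) (j : Fin n) : Fin m → ℝ :=
  fun i => if ∀ i' : Fin m, u i' j ≤ u i j then 1 else 0

def IsSurrogateColumn (u : Fin m → Fin n → ℝ) (b : Fin m → ℝ) (j : Fin n) : Prop :=
  (∃ γ : ℝ, 0 < γ ∧ ∃ β : ℝ, ∀ x ∈ simplex m, pay u x j = γ * dot b x + β) ∨
    (Mval u {j} = Mval u Set.univ ∧ b = argmaxIndicator u j)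

variable {u : Fin m → Fin n → ℝ} {b x z : Fin m → ℝ} {j : Fin n}

lemma dot_argmaxIndicator_le_one (hx : x ∈ simplex m) : dot (argmaxIndicator u j) x ≤ 1 := by
  rw [← hx.2]
  refine Finset.sum_le_sum fun i _ => ?_
  unfold argmaxIndicator
  split_ifs
  · rw [one_mul]
  · rw [zero_mul]; exact hx.1 i

lemma dot_argmaxIndicator_eq_one (hx : x ∈ simplex m) (h : ∀ i, u i j ≤ pay u x j) :
    dot (argmaxIndicator u j) x = 1 := by
  have hgap : ∀ i ∈ Finset.univ, 0 ≤ x i * (pay u x j - u i j) :=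
    fun i _ => mul_nonneg (hx.1 i) (sub_nonneg.2 (h i))
  have hsum : ∑ i, x i * (pay u x j - u i j) = 0 := by
    simp only [mul_sub, Finset.sum_sub_distrib, ← Finset.sum_mul, hx.2, one_mul, pay, sub_self]
  have hsupp := (Finset.sum_eq_zero_iff_of_nonneg hgap).1 hsum
  rw [← hx.2]
  refine Finset.sum_congr rfl fun i hi => ?_
  rcases mul_eq_zero.1 (hsupp i hi) with hxi | hgi
  · rw [hxi, mul_zero]
  · have hmax : ∀ i', u i' j ≤ u i j := fun i' => (h i').trans (sub_eq_zero.1 hgi).le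
    simp [argmaxIndicator, hmax]

lemma IsSurrogateColumn.dot_le_dot (hb : IsSurrogateColumn u b j) (hx : x ∈ simplex m)
    (hz : z ∈ simplex m) (hxM : pay u x j ≤ Mval u Set.univ)
    (hMz : Mval u Set.univ ≤ pay u z j) : dot b x ≤ dot b z := by
  rcases hb with ⟨γ, hγ, β, hlin⟩ | ⟨hM, rfl⟩
  · have := hxM.trans hMz
    rw [hlin x hx, hlin z hz] at this
    exact le_of_mul_le_mul_left (by linarith) hγ
  · rw [dot_argmaxIndicator_eq_one hz fun i => (le_Mval_singleton i).trans (hM ▸ hMz)]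
    exact dot_argmaxIndicator_le_one hx

end Surrogate

section Minimax

lemma toLinearMap₂'_of_apply_eq_sum_mul_pay (u : Fin m → Fin n → ℝ) (x : Fin m → ℝ)
    (q : Fin n → ℝ) :
    Matrix.toLinearMap₂' ℝ (Matrix.of u) x q = ∑ j, q j * pay u x j := by
  simp only [Matrix.toLinearMap₂'_apply', dotProduct, Matrix.mulVec, pay, Finset.mul_sum,
    Matrix.of_apply]
  rw [Finset.sum_comm]
  simp only [mul_comm, mul_left_comm]

lemma exists_mixed_le_of_forall_exists_pay_le [Nonempty (Fin n)] {u : Fin m → Fin n → ℝ} {c : ℝ}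
    (hm : (simplex m).Nonempty) (h : ∀ x ∈ simplex m, ∃ j, pay u x j ≤ c) :
    ∃ q ∈ stdSimplex ℝ (Fin n), ∀ x ∈ simplex m, ∑ j, q j * pay u x j ≤ c := by
  let B : (Fin m → ℝ) →ₗ[ℝ] (Fin n → ℝ) →ₗ[ℝ] ℝ := Matrix.toLinearMap₂' ℝ (Matrix.of u)
  obtain ⟨q, hq, z, hz, hsaddle⟩ := Sion.exists_isSaddlePointOn (f := fun q x => B x q)
    ⟨_, single_mem_stdSimplex ℝ (Classical.arbitrary _)⟩ (convex_stdSimplex ℝ _)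
    (isCompact_stdSimplex ℝ _)
    (fun x _ => (B x).continuous_of_finiteDimensional.lowerSemicontinuous.lowerSemicontinuousOn _)
    (fun x _ => ((B x).convexOn (convex_stdSimplex ℝ _)).quasiconvexOn)
    (convex_stdSimplex ℝ _) hm (isCompact_stdSimplex ℝ _)
    (fun q _ =>
      (B.flip q).continuous_of_finiteDimensional.upperSemicontinuous.upperSemicontinuousOn _)
    (fun q _ => ((B.flip q).concaveOn (convex_stdSimplex ℝ _)).quasiconcaveOn)
  obtain ⟨j, hj⟩ := h z hz
  refine ⟨q, hq, fun x hx => ?_⟩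
  have hqx := hsaddle _ (single_mem_stdSimplex ℝ j) x hx
  simp only [B, toLinearMap₂'_of_apply_eq_sum_mul_pay, Pi.single_apply, ite_mul, one_mul,
    zero_mul, Finset.sum_ite_eq', Finset.mem_univ, if_true] at hqx
  exact hqx.trans hj

end Minimax

section Inducibility

variable {v : Fin m → Fin n → ℝ} {y : Fin m → ℝ} {k : Fin n}

lemma inducible_of_forall_pay_le (hy : y ∈ simplex m)
    (hk : ∀ x ∈ simplex m, pay v x k ≤ pay v y k) : Inducible v y k := by
  let uF : Fin m → Fin n → ℝ := fun _ j => if j = k then 1 else 0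
  have hpay : ∀ x ∈ simplex m, ∀ j, pay uF x j = if j = k then 1 else 0 := by
    intro x hx j
    split_ifs with hj <;> simp [pay, uF, hj, hx.2]
  have hBR : ∀ x ∈ simplex m, ∀ j ∈ BR uF x, j = k := by
    intro x hx j hj
    by_contra hjk
    have := hj k
    rw [hpay x hx, hpay x hx, if_pos rfl, if_neg hjk] at this
    norm_num at this
  refine ⟨uF, hy, fun j => ?_, fun x hx j hj => hBR x hx j hj ▸ hk x hx⟩
  rw [hpay y hy, hpay y hy, if_pos rfl]
  split_ifs <;> norm_num

lemma add_mul_nonpos_of_sum_mul_nonpos {q p : Fin n → ℝ} (hq : ∀ j, 0 ≤ q j)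
    (hsum : ∑ j, q j * p j ≤ 0) {j₁ j₂ : Fin n} (hne : j₁ ≠ j₂)
    (hoff : ∀ j, j ≠ j₁ → j ≠ j₂ → 0 < q j → 0 ≤ p j) : q j₁ * p j₁ + q j₂ * p j₂ ≤ 0 := by
  rw [← Finset.sum_pair hne (f := fun j => q j * p j)]
  refine le_trans (Finset.sum_le_sum_of_subset_of_nonneg (Finset.subset_univ _) ?_) hsum
  intro j _ hj
  simp only [Finset.mem_insert, Finset.mem_singleton, not_or] at hj
  rcases (hq j).lt_or_eq with hqj | hqj
  · exact mul_nonneg hqj.le (hoff j hj.1 hj.2 hqj)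
  · rw [← hqj, zero_mul]

/-- `jh` is the companion of `k`: its follower payoff ties with that of `k` at `y` and beats it
exactly where the leader would gain from `k`. -/
lemma inducible_of_companion (hy : y ∈ simplex m) (hyk : pay v y k = 0) {q : Fin n → ℝ}
    (hq : ∀ j, 0 ≤ q j) (hqv : ∀ x ∈ simplex m, ∑ j, q j * pay v x j ≤ 0)
    {jh : Fin n} (hjhk : jh ≠ k) (hqjh : 0 < q jh)
    (hmin : ∀ j ≠ k, 0 < q j → pay v y jh ≤ pay v y j) : Inducible v y k := by
  let uF : Fin m → Fin n → ℝ := fun i j =>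
    if j = k then -(q jh * v i jh) - (q jh + q k) * v i k
    else if 0 < q j then -(q jh * v i j) else -1
  have hpayk : ∀ x, pay uF x k = -(q jh * pay v x jh) - (q jh + q k) * pay v x k := by
    intro x
    simp only [pay, uF, if_pos, Finset.mul_sum, ← Finset.sum_neg_distrib,
      ← Finset.sum_sub_distrib]
    exact Finset.sum_congr rfl fun i _ => by ring
  have hpaysupp : ∀ x j, j ≠ k → 0 < q j → pay uF x j = -(q jh * pay v x j) := by
    intro x j hjk hqj
    simp only [pay, uF, if_neg hjk, if_pos hqj, Finset.mul_sum, ← Finset.sum_neg_distrib]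
    exact Finset.sum_congr rfl fun i _ => by ring
  have hpayoff : ∀ x ∈ simplex m, ∀ j, j ≠ k → ¬ 0 < q j → pay uF x j = -1 := by
    intro x hx j hjk hqj
    simp [pay, uF, hjk, hqj, hx.2]
  have hyjh : pay v y jh ≤ 0 := by
    by_contra! hpos
    have := add_mul_nonpos_of_sum_mul_nonpos hq (hqv y hy) hjhk
      fun j _ hjk hqj => hpos.le.trans (hmin j hjk hqj)
    rw [hyk, mul_zero, add_zero] at this
    nlinarith
  refine ⟨uF, hy, fun j => ?_, fun x hx j hj => ?_⟩
  · rw [hpayk, hyk]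
    by_cases hjk : j = k
    · rw [hjk, hpayk, hyk]
    by_cases hqj : 0 < q j
    · rw [hpaysupp y j hjk hqj]
      nlinarith [hmin j hjk hqj]
    · rw [hpayoff y hy j hjk hqj]
      nlinarith
  rw [hyk]
  by_contra! hpos
  by_cases hjk : j = k
  · rw [hjk] at hj hpos
    have := hj jh
    rw [hpayk, hpaysupp x jh hjhk hqjh] at this
    nlinarith [hq k]
  have hnonneg : ∃ j₀, 0 ≤ pay uF x j₀ := by
    by_cases hex : ∃ j₀ ≠ k, 0 < q j₀ ∧ pay v x j₀ ≤ 0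
    · obtain ⟨j₀, hj₀k, hqj₀, hj₀⟩ := hex
      exact ⟨j₀, by rw [hpaysupp x j₀ hj₀k hqj₀]; nlinarith⟩
    push Not at hex
    have hpair := add_mul_nonpos_of_sum_mul_nonpos hq (hqv x hx) hjhk
      fun j' _ hj'k hqj' => (hex j' hj'k hqj').le
    have hxjh := hex jh hjhk hqjh
    have hxk : pay v x k ≤ 0 := by nlinarith [hq k]
    exact ⟨k, by rw [hpayk]; nlinarith⟩
  obtain ⟨j₀, hj₀⟩ := hnonneg
  have hjx := hj₀.trans (hj j₀)
  by_cases hqj : 0 < q j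
  · rw [hpaysupp x j hjk hqj] at hjx
    nlinarith
  · rw [hpayoff x hx j hjk hqj] at hjx
    norm_num at hjx

lemma inducible_of_forall_exists_pay_nonpos (hy : y ∈ simplex m) (hyk : pay v y k = 0)
    (h : ∀ x ∈ simplex m, ∃ j, pay v x j ≤ 0) : Inducible v y k := by
  have : Nonempty (Fin n) := ⟨k⟩
  obtain ⟨q, ⟨hq, hq1⟩, hqv⟩ := exists_mixed_le_of_forall_exists_pay_le ⟨y, hy⟩ h
  by_cases hex : ∃ j ≠ k, 0 < q j
  · obtain ⟨j, hjk, hqj⟩ := hex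
    have hne : (Finset.univ.filter fun j => j ≠ k ∧ 0 < q j).Nonempty := ⟨j, by simp [hjk, hqj]⟩
    obtain ⟨jh, hjh, hmin⟩ := Finset.exists_min_image _ (fun j => pay v y j) hne
    simp only [Finset.mem_filter, Finset.mem_univ, true_and] at hjh hmin
    exact inducible_of_companion hy hyk hq hqv hjh.1 hjh.2 fun j hjk hqj => hmin j ⟨hjk, hqj⟩
  push Not at hex
  have hqk : ∀ j ≠ k, q j = 0 := fun j hj => le_antisymm (hex j hj) (hq j)
  have hsingle : ∀ p : Fin n → ℝ, ∑ j, q j * p j = q k * p k := fun p =>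
    Finset.sum_eq_single k (fun j _ hj => by rw [hqk j hj, zero_mul]) (by simp)
  have hk1 : q k = 1 := by
    rw [← hq1, Finset.sum_eq_single k (fun j _ hj => hqk j hj) (by simp)]
  refine inducible_of_forall_pay_le hy fun x hx => ?_
  simpa [hsingle, hk1, hyk] using hqv x hx

end Inducibility

section SurrogateGame

variable {a : Fin n → Fin m → ℝ} {J : Set (Fin n)} {k : Fin n} {xstar y x : Fin m → ℝ}

lemma pay_eq_dot_sub {u : Fin m → Fin n → ℝ} {j : Fin n} {b : Fin m → ℝ} {c : ℝ}
    (hcol : ∀ i, u i j = b i - c) (hx : x ∈ simplex m) : pay u x j = dot b x - c := by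
  simp only [pay, dot, hcol, mul_sub, Finset.sum_sub_distrib]
  rw [← Finset.sum_mul, hx.2, one_mul]
  simp only [mul_comm]

lemma pay_tuLdef_self (hx : x ∈ simplex m) :
    pay (tuLdef a J k xstar y) x k = dot (a k) x - dot (a k) y :=
  pay_eq_dot_sub (fun _ => if_pos rfl) hx

lemma pay_tuLdef_of_mem {j : Fin n} (hj : j ∈ J) (hjk : j ≠ k) (hx : x ∈ simplex m) :
    pay (tuLdef a J k xstar y) x j = dot (a j) x - dot (a j) xstar :=
  pay_eq_dot_sub (fun _ => by simp [tuLdef, hjk, hj]) hx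

end SurrogateGame

/-- the maximin value of the surrogate game ũ^L is at most 0 = ũ^L(y,k);
consequently (y,k) is inducible with respect to ũ^L. -/
theorem surrogate_maximin_le_zero {m n : ℕ}
    (uL : Fin m → Fin n → ℝ)
    (J : Set (Fin n)) (hJne : J.Nonempty)
    (xstar : Fin m → ℝ) (hxstar : xstar ∈ simplex m)
    (hJ : ∀ j ∈ J, pay uL xstar j = Mval uL J ∧ Mval uL J = Mval uL Set.univ)
    (a : Fin n → Fin m → ℝ)
    (ha : ∀ j : Fin n,
      (∃ γ : ℝ, 0 < γ ∧ ∃ β : ℝ, ∀ x ∈ simplex m, pay uL x j = γ * dot (a j) x + β) ∨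
      (Mval uL {j} = Mval uL Set.univ ∧
        a j = fun i => if ∀ i' : Fin m, uL i' j ≤ uL i j then (1 : ℝ) else 0))
    (k : Fin n) (y : Fin m → ℝ) (hy : y ∈ simplex m)
    (hyk : Mval uL Set.univ ≤ pay uL y k) :
    Mval (tuLdef a J k xstar y) Set.univ ≤ 0 ∧
      pay (tuLdef a J k xstar y) y k = 0 ∧
      Inducible (tuLdef a J k xstar y) y k := by
  obtain ⟨j₀, hj₀⟩ := hJne
  have hM : Mval uL J = Mval uL Set.univ := (hJ j₀ hj₀).2
  have hvy : pay (tuLdef a J k xstar y) y k = 0 := by rw [pay_tuLdef_self hy, sub_self]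
  have hkey : ∀ x ∈ simplex m, ∃ j, pay (tuLdef a J k xstar y) x j ≤ 0 := by
    intro x hx
    obtain ⟨j, hjJ, hjx⟩ := exists_pay_le_Mval (u := uL) ⟨j₀, hj₀⟩ hx
    rw [hM] at hjx
    refine ⟨j, ?_⟩
    by_cases hjk : j = k
    · subst hjk
      rw [pay_tuLdef_self hx, sub_nonpos]
      exact IsSurrogateColumn.dot_le_dot (ha j) hx hy hjx hyk
    · rw [pay_tuLdef_of_mem hjJ hjk hx, sub_nonpos]
      exact IsSurrogateColumn.dot_le_dot (ha j) hx hxstar hjx ((hJ j hjJ).1.trans hM).ge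
  refine ⟨Mval_le_of_forall_exists_pay_le ⟨xstar, hxstar⟩ fun x hx => ?_, hvy,
    inducible_of_forall_exists_pay_nonpos hy hvy hkey⟩
  obtain ⟨j, hj⟩ := hkey x hx
  exact ⟨j, Set.mem_univ j, hj⟩
end
end

section
/- With the construction of ũ_g^F below, define, for g ∈ ℝ^{m₁−1} with all coordinates strictly positive, I_g = { i ∈ [m₁−1] : (x^i, n) is a strong Stackelberg equilibrium of (u^L, ũ_g^F) }, where x^i ∈ argmin_{x ∈ Γ_i ∩ f_g^{-1}(n)} x_i (this set is independent of the choice of x^i). If I_g ≠ ∅ and i ∈ [m₁−1] \ I_g, then there exists g* > 0 such that, letting g' be g with its i-th coordinate replaced by g*, one has I_{g'} = I_g ∪ {i}. -/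
/-!
Let `c + W` be the least value of `max_{j ≠ n} μ(h, j)` over mixed strategies `h` supported on the
actions `m₁, …, m`; it depends neither on `g` nor on `i`. A point `t e_i + (1 - t) h` of `Γ_i` lies
in `f_g^{-1}(n)` iff `t g_i ≥ (1 - t) (max_{j ≠ n} μ(h, j) - W)`, so the critical point `x^i` has
`x^i_i = c / (g_i + c)`, and the leader's payoff there, `M - c (M - u^L(i, n)) / (g_i + c)` with
`M = M_{{n}}`, increases with `g_i`. Choose `g*` so that this payoff becomes the equilibrium value
`v` of the game for `g`. Every `x ∈ f_{g'}^{-1}(n)` satisfies `∑_{k < m₁} x_k (g'_k + c) ≥ c`, and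
averaging the bounds at the critical points with these weights shows that `(x, n)` gives the leader
at most `v`; the other follower responses were already best responses under `g`. Hence the
equilibrium value is still `v`, and it is attained exactly at the critical points indexed by
`I_g ∪ {i}`.
-/

open scoped Classical
open Finset

noncomputable section

/-- The facet Γ_i = {x ∈ Δ_m : 1 − x_i = Σ_{k=m₁}^m x_k} (0-based indices: the paper's
actions m₁,…,m are the indices k with m₁−1 ≤ (k:ℕ)). -/
def GammaSet {m : ℕ} (m₁ : ℕ) (i : Fin m) : Set (Fin m → ℝ) :=
  {x ∈ simplex m |
    1 - x i = ∑ k ∈ Finset.univ.filter (fun k : Fin m => m₁ - 1 ≤ (k : ℕ)), x k}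

/-- W = min_{i∈[m], j∈[n]} μ(i,j) − 1. -/
def Wmin {m n : ℕ} (μ : Fin m → Fin n → ℝ) : ℝ :=
  sInf (Set.range fun p : Fin m × Fin n => μ p.1 p.2) - 1

/-- The follower payoff ũ_g^F (as a matrix; on Δ_m its linear extension is
ũ_g^F(x,j) = Σ_{i=m₁}^m x_i·μ(i,j) for j ≠ n and
ũ_g^F(x,n) = Σ_{i=1}^{m₁−1} x_i·g_i + W·Σ_{i=m₁}^m x_i). -/
def tuFg {m n : ℕ} (m₁ : ℕ) (μ : Fin m → Fin n → ℝ) (jn : Fin n) (g : Fin m → ℝ) :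
    Fin m → Fin n → ℝ :=
  fun i j =>
    if j = jn then (if (i : ℕ) < m₁ - 1 then g i else Wmin μ)
    else (if (i : ℕ) < m₁ - 1 then 0 else μ i j)

/-- f_g^{-1}(n) = {x ∈ Δ_m : n ∈ f_g(x)} where f_g is the BR-correspondence of ũ_g^F. -/
def finv {m n : ℕ} (m₁ : ℕ) (μ : Fin m → Fin n → ℝ) (jn : Fin n) (g : Fin m → ℝ) :
    Set (Fin m → ℝ) :=
  {x ∈ simplex m | jn ∈ BR (tuFg m₁ μ jn g) x}

lemma pay_smul {m n : ℕ} (u : Fin m → Fin n → ℝ) (a : ℝ) (x : Fin m → ℝ) (j : Fin n) :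
    pay u (a • x) j = a * pay u x j := by
  simp [pay, mul_sum, mul_assoc]

lemma SSE_iff_le_pay {m n : ℕ} {uL uF : Fin m → Fin n → ℝ} {v : ℝ}
    (hub : ∀ x ∈ simplex m, ∀ j ∈ BR uF x, pay uL x j ≤ v)
    {x₀ : Fin m → ℝ} {j₀ : Fin n} (hx₀ : x₀ ∈ simplex m) (hj₀ : j₀ ∈ BR uF x₀)
    (hv : v ≤ pay uL x₀ j₀) {x : Fin m → ℝ} {j : Fin n} (hx : x ∈ simplex m)
    (hj : j ∈ BR uF x) :
    SSE uL uF x j ↔ v ≤ pay uL x j :=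
  ⟨fun h => hv.trans (h.2.2 x₀ hx₀ j₀ hj₀),
    fun h => ⟨hx, hj, fun x' hx' j' hj' => (hub x' hx' j' hj').trans h⟩⟩

lemma IsProperCover.exists_ne {m n : ℕ} {uL μ : Fin m → Fin n → ℝ} {S : Set (Fin n)}
    (hμ : IsProperCover uL μ S) {j : Fin n} (hj : j ∈ S) {x : Fin m → ℝ} (hx : x ∈ simplex m) :
    ∃ j', j' ≠ j := by
  by_contra! h
  exact hμ.2 x hx j hj fun j' => by rw [h j']

lemma exists_gt_sub_div_mul_eq {c d g v M : ℝ} (hc : 0 < c) (hg : 0 < g) (hd : 0 < d)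
    (hvM : v < M) (hv : M - c / (g + c) * d < v) :
    ∃ g', g < g' ∧ M - c / (g' + c) * d = v := by
  refine ⟨c * d / (M - v) - c, ?_, ?_⟩
  · rw [div_mul_eq_mul_div, sub_lt_comm, lt_div_iff₀ (by linarith)] at hv
    rw [lt_sub_iff_add_lt, lt_div_iff₀ (by linarith)]
    linarith
  · rw [sub_add_cancel]
    field_simp
    ring

section Parts

variable {m : ℕ} (m₁ : ℕ)

def lowPart (x : Fin m → ℝ) : Fin m → ℝ := fun k => if (k : ℕ) < m₁ - 1 then x k else 0

def highPart (x : Fin m → ℝ) : Fin m → ℝ := fun k => if m₁ - 1 ≤ (k : ℕ) then x k else 0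

def highSimplex (m : ℕ) : Set (Fin m → ℝ) :=
  {h ∈ simplex m | ∀ k : Fin m, (k : ℕ) < m₁ - 1 → h k = 0}

lemma lowPart_add_highPart (x : Fin m → ℝ) (k : Fin m) :
    lowPart m₁ x k + highPart m₁ x k = x k := by
  unfold lowPart highPart; split_ifs <;> first | omega | ring

lemma sum_lowPart_add_sum_highPart (x : Fin m → ℝ) :
    ∑ k, lowPart m₁ x k + ∑ k, highPart m₁ x k = ∑ k, x k := by
  rw [← sum_add_distrib]; exact sum_congr rfl fun k _ => lowPart_add_highPart m₁ x k

lemma lowPart_nonneg {x : Fin m → ℝ} (hx : ∀ k, 0 ≤ x k) (k : Fin m) : 0 ≤ lowPart m₁ x k := by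
  unfold lowPart; split_ifs <;> simp [hx k]

lemma highPart_nonneg {x : Fin m → ℝ} (hx : ∀ k, 0 ≤ x k) (k : Fin m) :
    0 ≤ highPart m₁ x k := by
  unfold highPart; split_ifs <;> simp [hx k]

lemma sum_highPart (x : Fin m → ℝ) :
    ∑ k, highPart m₁ x k = ∑ k ∈ univ.filter (fun k : Fin m => m₁ - 1 ≤ (k : ℕ)), x k :=
  (sum_filter _ _).symm

end Parts

section Payoffs

variable {m n : ℕ} {m₁ : ℕ}

lemma pay_tuFg_self (μ : Fin m → Fin n → ℝ) (jn : Fin n) (γ x : Fin m → ℝ) :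
    pay (tuFg m₁ μ jn γ) x jn
      = ∑ k, lowPart m₁ x k * γ k + Wmin μ * ∑ k, highPart m₁ x k := by
  unfold pay
  rw [mul_sum, ← sum_add_distrib]
  refine sum_congr rfl fun k _ => ?_
  simp only [tuFg, lowPart, highPart, if_true]
  split_ifs <;> first | omega | ring

lemma pay_tuFg_of_ne (μ : Fin m → Fin n → ℝ) {jn j : Fin n} (hj : j ≠ jn) (γ x : Fin m → ℝ) :
    pay (tuFg m₁ μ jn γ) x j = pay μ (highPart m₁ x) j := by
  unfold pay
  refine sum_congr rfl fun k _ => ?_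
  simp only [tuFg, highPart, hj, if_false]
  split_ifs <;> first | omega | ring

lemma pay_self_eq_sub {uL : Fin m → Fin n → ℝ} {jn : Fin n} {Mn : ℝ}
    (hhigh : ∀ i : Fin m, m₁ - 1 ≤ (i : ℕ) → uL i jn = Mn) {x : Fin m → ℝ} (hx : ∑ k, x k = 1) :
    pay uL x jn = Mn - ∑ k, lowPart m₁ x k * (Mn - uL k jn) := by
  have hpoint : ∀ k, x k * uL k jn = Mn * x k - lowPart m₁ x k * (Mn - uL k jn) := by
    intro k
    unfold lowPart
    split_ifs with hk
    · ring
    · rw [hhigh k (by omega)]; ring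
  simp only [pay, hpoint, sum_sub_distrib, ← mul_sum, hx, mul_one]

lemma Wmin_add_one_le (μ : Fin m → Fin n → ℝ) (k : Fin m) (j : Fin n) : Wmin μ + 1 ≤ μ k j := by
  have h : sInf (Set.range fun p : Fin m × Fin n => μ p.1 p.2) ≤ μ k j :=
    csInf_le (Set.finite_range _).bddBelow ⟨(k, j), rfl⟩
  unfold Wmin; linarith

lemma Wmin_add_one_le_pay (μ : Fin m → Fin n → ℝ) {h : Fin m → ℝ} (hh : h ∈ simplex m)
    (j : Fin n) : Wmin μ + 1 ≤ pay μ h j := by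
  calc Wmin μ + 1 = ∑ k, h k * (Wmin μ + 1) := by rw [← sum_mul, hh.2, one_mul]
    _ ≤ pay μ h j := sum_le_sum fun k _ =>
      mul_le_mul_of_nonneg_left (Wmin_add_one_le μ k j) (hh.1 k)

lemma mem_BR_tuFg_of_le {μ : Fin m → Fin n → ℝ} {jn j : Fin n}
    {γ γ' : Fin m → ℝ} (hγ : ∀ k : Fin m, (k : ℕ) < m₁ - 1 → γ k ≤ γ' k)
    {x : Fin m → ℝ} (hx : ∀ k, 0 ≤ x k) (hj : j ≠ jn) (h : j ∈ BR (tuFg m₁ μ jn γ') x) :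
    j ∈ BR (tuFg m₁ μ jn γ) x := by
  intro j'
  calc pay (tuFg m₁ μ jn γ) x j' ≤ pay (tuFg m₁ μ jn γ') x j' :=
        sum_le_sum fun k _ => mul_le_mul_of_nonneg_left
          (by unfold tuFg; split_ifs with _ hk <;> first | exact le_rfl | exact hγ k hk) (hx k)
    _ ≤ pay (tuFg m₁ μ jn γ') x j := h j'
    _ = pay (tuFg m₁ μ jn γ) x j := by rw [pay_tuFg_of_ne μ hj, pay_tuFg_of_ne μ hj]

end Payoffs

section Facet

variable {m : ℕ} {m₁ : ℕ} {i : Fin m}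

lemma sum_highPart_of_mem_GammaSet {x : Fin m → ℝ} (hx : x ∈ GammaSet m₁ i) :
    ∑ k, highPart m₁ x k = 1 - x i := by
  rw [sum_highPart, hx.2]

lemma lowPart_of_mem_GammaSet (hi : (i : ℕ) < m₁ - 1) {x : Fin m → ℝ} (hx : x ∈ GammaSet m₁ i) :
    lowPart m₁ x = (Pi.single i (x i) : Fin m → ℝ) := by
  have hsum : ∑ k, (lowPart m₁ x k - (Pi.single i (x i) : Fin m → ℝ) k) = 0 := by
    have := sum_lowPart_add_sum_highPart m₁ x
    rw [sum_highPart_of_mem_GammaSet hx, hx.1.2] at this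
    rw [sum_sub_distrib, sum_pi_single']
    simp only [mem_univ, if_true]
    linarith
  have hnn : ∀ k, 0 ≤ lowPart m₁ x k - (Pi.single i (x i) : Fin m → ℝ) k := by
    intro k
    by_cases hk : k = i
    · subst hk; simp [lowPart, hi]
    · simpa [Pi.single_apply, hk] using lowPart_nonneg m₁ hx.1.1 k
  funext k
  have := (sum_eq_zero_iff_of_nonneg fun k _ => hnn k).1 hsum k (mem_univ k)
  linarith

lemma sum_lowPart_mul_of_mem_GammaSet (hi : (i : ℕ) < m₁ - 1) {x : Fin m → ℝ}
    (hx : x ∈ GammaSet m₁ i) (a : Fin m → ℝ) :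
    ∑ k, lowPart m₁ x k * a k = x i * a i := by
  simp [lowPart_of_mem_GammaSet hi hx, Pi.single_apply]

lemma highPart_single_add_smul (hi : (i : ℕ) < m₁ - 1) {h : Fin m → ℝ}
    (hh : h ∈ highSimplex m₁ m) (t : ℝ) :
    highPart m₁ (Pi.single i t + (1 - t) • h) = (1 - t) • h := by
  funext k
  by_cases hk : k = i
  · subst hk; simp [highPart, hh.2 k hi]; omega
  · simp only [highPart, Pi.add_apply, Pi.smul_apply, Pi.single_apply, hk, if_false, zero_add]
    split_ifs with hk'
    · rfl
    · simp [hh.2 k (by omega)]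

lemma lowPart_single_add_smul (hi : (i : ℕ) < m₁ - 1) {h : Fin m → ℝ}
    (hh : h ∈ highSimplex m₁ m) (t : ℝ) :
    lowPart m₁ (Pi.single i t + (1 - t) • h) = (Pi.single i t : Fin m → ℝ) := by
  funext k
  by_cases hk : k = i
  · subst hk; simp [lowPart, hh.2 k hi, hi]
  · simp only [lowPart, Pi.add_apply, Pi.smul_apply, Pi.single_apply, hk, if_false, zero_add]
    split_ifs with hk'
    · simp [hh.2 k hk']
    · rfl

lemma single_add_smul_mem_GammaSet (hi : (i : ℕ) < m₁ - 1) {h : Fin m → ℝ}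
    (hh : h ∈ highSimplex m₁ m) {t : ℝ} (ht0 : 0 ≤ t) (ht1 : t ≤ 1) :
    Pi.single i t + (1 - t) • h ∈ GammaSet m₁ i := by
  have hhigh : ∑ k, highPart m₁ (Pi.single i t + (1 - t) • h) k = 1 - t := by
    simp [highPart_single_add_smul hi hh, ← mul_sum, hh.1.2]
  have hlow : ∑ k, lowPart m₁ (Pi.single i t + (1 - t) • h) k = t := by
    simp [lowPart_single_add_smul hi hh]
  refine ⟨⟨fun k => ?_, ?_⟩, ?_⟩
  · simp only [Pi.add_apply, Pi.smul_apply, smul_eq_mul, Pi.single_apply]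
    exact add_nonneg (by split_ifs <;> simp [ht0]) (mul_nonneg (by linarith) (hh.1.1 k))
  · rw [← sum_lowPart_add_sum_highPart m₁, hhigh, hlow]; ring
  · rw [← sum_highPart, hhigh]; simp [hh.2 i hi]

end Facet

/-- `c + Wmin μ` is the minimum, over mixed strategies `h` supported on the high actions, of
`max_{j ≠ jn} μ(h, j)`. -/
def IsMinExcess {m n : ℕ} (m₁ : ℕ) (μ : Fin m → Fin n → ℝ) (jn : Fin n) (c : ℝ) : Prop :=
  (∃ h ∈ highSimplex m₁ m, ∀ j, j ≠ jn → pay μ h j ≤ c + Wmin μ) ∧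
    ∀ h ∈ highSimplex m₁ m, ∃ j, j ≠ jn ∧ c + Wmin μ ≤ pay μ h j

lemma exists_isMinExcess {m n : ℕ} {m₁ : ℕ} (μ : Fin m → Fin n → ℝ) {jn : Fin n}
    (hj : ∃ j, j ≠ jn) (hm : m₁ - 1 < m) : ∃ c, IsMinExcess m₁ μ jn c := by
  obtain ⟨j₁, hj₁⟩ := hj
  have hne : (univ.erase jn).Nonempty := ⟨j₁, mem_erase.2 ⟨hj₁, mem_univ _⟩⟩
  have hK : IsCompact (highSimplex m₁ m) := by
    have : highSimplex m₁ m = simplex m ∩ ⋂ k : Fin m, ⋂ _ : (k : ℕ) < m₁ - 1, {h | h k = 0} := by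
      ext; simp [highSimplex]
    rw [this]
    exact (isCompact_stdSimplex ℝ (Fin m)).inter_right <| isClosed_iInter fun k =>
      isClosed_iInter fun _ => isClosed_eq (continuous_apply k) continuous_const
  have hKne : (highSimplex m₁ m).Nonempty :=
    ⟨Pi.single ⟨m₁ - 1, hm⟩ 1, single_mem_stdSimplex ℝ _, fun k hk => by
      rw [Pi.single_apply, if_neg (by simp [Fin.ext_iff]; omega)]⟩
  have hE : Continuous fun h => (univ.erase jn).sup' hne (pay μ h ·) :=
    Continuous.finset_sup'_apply hne fun j _ => by unfold pay; fun_prop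
  obtain ⟨h₀, hh₀, hmin⟩ := hK.exists_isMinOn hKne hE.continuousOn
  refine ⟨(univ.erase jn).sup' hne (pay μ h₀ ·) - Wmin μ, ⟨h₀, hh₀, fun j hj => ?_⟩,
    fun h hh => ?_⟩
  · rw [sub_add_cancel]; exact le_sup' (pay μ h₀ ·) (mem_erase.2 ⟨hj, mem_univ _⟩)
  · obtain ⟨j, hj, hjeq⟩ := exists_mem_eq_sup' hne (pay μ h ·)
    refine ⟨j, (mem_erase.1 hj).1, ?_⟩
    rw [sub_add_cancel, ← hjeq]; exact hmin hh

namespace IsMinExcess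

variable {m n : ℕ} {m₁ : ℕ} {μ : Fin m → Fin n → ℝ} {jn : Fin n} {c : ℝ}

lemma one_le (hc : IsMinExcess m₁ μ jn c) : 1 ≤ c := by
  obtain ⟨h, hh, hle⟩ := hc.1
  obtain ⟨j, hj, -⟩ := hc.2 h hh
  linarith [hle j hj, Wmin_add_one_le_pay μ hh.1 j]

lemma exists_mul_sum_highPart_le_pay (hc : IsMinExcess m₁ μ jn c) {x : Fin m → ℝ}
    (hx : ∀ k, 0 ≤ x k) :
    ∃ j, j ≠ jn ∧ (c + Wmin μ) * ∑ k, highPart m₁ x k ≤ pay μ (highPart m₁ x) j := by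
  set S := ∑ k, highPart m₁ x k
  have hnn := highPart_nonneg m₁ hx
  rcases (sum_nonneg fun k _ => hnn k : 0 ≤ S).eq_or_lt with hS | hS
  · have h0 : highPart m₁ x = 0 :=
      funext fun k => (sum_eq_zero_iff_of_nonneg fun k _ => hnn k).1 hS.symm k (mem_univ k)
    obtain ⟨h, hh, -⟩ := hc.1
    obtain ⟨j, hj, -⟩ := hc.2 h hh
    exact ⟨j, hj, by rw [show S = 0 from hS.symm, h0]; simp [pay]⟩
  · have hmem : S⁻¹ • highPart m₁ x ∈ highSimplex m₁ m := by
      refine ⟨⟨fun k => mul_nonneg (inv_nonneg.2 hS.le) (hnn k), ?_⟩, fun k hk => ?_⟩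
      · simp [← mul_sum, S, inv_mul_cancel₀ hS.ne']
      · simp [highPart]; omega
    obtain ⟨j, hj, hle⟩ := hc.2 _ hmem
    rw [pay_smul, ← div_eq_inv_mul, le_div_iff₀ hS] at hle
    exact ⟨j, hj, hle⟩

lemma mul_sum_highPart_le (hc : IsMinExcess m₁ μ jn c) {γ x : Fin m → ℝ}
    (hx : x ∈ finv m₁ μ jn γ) :
    c * ∑ k, highPart m₁ x k ≤ ∑ k, lowPart m₁ x k * γ k := by
  obtain ⟨j, hj, hle⟩ := hc.exists_mul_sum_highPart_le_pay hx.1.1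
  have hBR := hx.2 j
  rw [pay_tuFg_of_ne μ hj, pay_tuFg_self] at hBR
  linarith

variable {i : Fin m} {γ : Fin m → ℝ}

lemma div_le_coord (hc : IsMinExcess m₁ μ jn c) (hi : (i : ℕ) < m₁ - 1) (hγ : 0 < γ i)
    {x : Fin m → ℝ} (hx : x ∈ GammaSet m₁ i ∩ finv m₁ μ jn γ) : c / (γ i + c) ≤ x i := by
  have hload := hc.mul_sum_highPart_le hx.2
  rw [sum_highPart_of_mem_GammaSet hx.1, sum_lowPart_mul_of_mem_GammaSet hi hx.1] at hload
  rw [div_le_iff₀ (by linarith [hc.one_le])]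
  linarith

lemma exists_coord_eq (hc : IsMinExcess m₁ μ jn c) (hi : (i : ℕ) < m₁ - 1) (hγ : 0 < γ i) :
    ∃ z ∈ GammaSet m₁ i ∩ finv m₁ μ jn γ, z i = c / (γ i + c) := by
  obtain ⟨h, hh, hle⟩ := hc.1
  have hpos : 0 < γ i + c := by linarith [hc.one_le]
  set t := c / (γ i + c)
  have ht0 : 0 ≤ t := div_nonneg (by linarith [hc.one_le]) hpos.le
  have ht1 : t ≤ 1 := div_le_one_of_le₀ (by linarith) hpos.le
  have htc : (1 - t) * c = t * γ i := by simp only [t]; field_simp; ring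
  have hz := single_add_smul_mem_GammaSet hi hh ht0 ht1
  have hzi : (Pi.single i t + (1 - t) • h : Fin m → ℝ) i = t := by simp [hh.2 i hi]
  refine ⟨_, ⟨hz, hz.1, fun j => ?_⟩, hzi⟩
  by_cases hj : j = jn
  · rw [hj]
  · rw [pay_tuFg_of_ne μ hj, highPart_single_add_smul hi hh, pay_smul, pay_tuFg_self,
      sum_highPart_of_mem_GammaSet hz, sum_lowPart_mul_of_mem_GammaSet hi hz, hzi]
    nlinarith [hle j hj]

lemma coord_eq_of_forall_le (hc : IsMinExcess m₁ μ jn c) (hi : (i : ℕ) < m₁ - 1)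
    (hγ : 0 < γ i) {x : Fin m → ℝ} (hx : x ∈ GammaSet m₁ i ∩ finv m₁ μ jn γ)
    (hmin : ∀ y ∈ GammaSet m₁ i ∩ finv m₁ μ jn γ, x i ≤ y i) : x i = c / (γ i + c) := by
  obtain ⟨z, hz, hzi⟩ := hc.exists_coord_eq hi hγ
  exact le_antisymm (hzi ▸ hmin z hz) (hc.div_le_coord hi hγ hx)

variable {uL : Fin m → Fin n → ℝ} {Mn : ℝ}

lemma pay_eq_of_forall_le (hc : IsMinExcess m₁ μ jn c)
    (hhigh : ∀ i : Fin m, m₁ - 1 ≤ (i : ℕ) → uL i jn = Mn) (hi : (i : ℕ) < m₁ - 1)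
    (hγ : 0 < γ i) {x : Fin m → ℝ} (hx : x ∈ GammaSet m₁ i ∩ finv m₁ μ jn γ)
    (hmin : ∀ y ∈ GammaSet m₁ i ∩ finv m₁ μ jn γ, x i ≤ y i) :
    pay uL x jn = Mn - c / (γ i + c) * (Mn - uL i jn) := by
  rw [pay_self_eq_sub hhigh hx.1.1.2, sum_lowPart_mul_of_mem_GammaSet hi hx.1,
    hc.coord_eq_of_forall_le hi hγ hx hmin]

lemma pay_lt (hc : IsMinExcess m₁ μ jn c)
    (hhigh : ∀ i : Fin m, m₁ - 1 ≤ (i : ℕ) → uL i jn = Mn)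
    (hlow : ∀ i : Fin m, (i : ℕ) < m₁ - 1 → uL i jn < Mn) (hi : (i : ℕ) < m₁ - 1)
    (hγ : 0 < γ i) {x : Fin m → ℝ} (hx : x ∈ GammaSet m₁ i ∩ finv m₁ μ jn γ) :
    pay uL x jn < Mn := by
  have hxi : 0 < x i := (div_pos (by linarith [hc.one_le]) (by linarith [hc.one_le])).trans_le
    (hc.div_le_coord hi hγ hx)
  rw [pay_self_eq_sub hhigh hx.1.1.2, sum_lowPart_mul_of_mem_GammaSet hi hx.1]
  linarith [mul_pos hxi (sub_pos.2 (hlow i hi))]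

lemma pay_le_of_mem_finv (hc : IsMinExcess m₁ μ jn c)
    (hhigh : ∀ i : Fin m, m₁ - 1 ≤ (i : ℕ) → uL i jn = Mn)
    (hγ : ∀ k : Fin m, (k : ℕ) < m₁ - 1 → 0 < γ k) {v : ℝ} (hvM : v ≤ Mn)
    (hv : ∀ k : Fin m, (k : ℕ) < m₁ - 1 → Mn - c / (γ k + c) * (Mn - uL k jn) ≤ v)
    {x : Fin m → ℝ} (hx : x ∈ finv m₁ μ jn γ) : pay uL x jn ≤ v := by
  have hc0 : 0 < c := by linarith [hc.one_le]
  have hpoint : ∀ k, lowPart m₁ x k * (γ k + c) * (Mn - v) ≤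
      c * (lowPart m₁ x k * (Mn - uL k jn)) := by
    intro k
    unfold lowPart
    split_ifs with hk
    · have hpos : 0 < γ k + c := by linarith [hγ k hk]
      have h1 : (γ k + c) * (Mn - v) ≤ c * (Mn - uL k jn) := by
        have := hv k hk
        rw [div_mul_eq_mul_div, sub_le_comm, le_div_iff₀ hpos] at this
        linarith
      nlinarith [hx.1.1 k]
    · simp
  have hmass : c ≤ ∑ k, lowPart m₁ x k * (γ k + c) := by
    have := hc.mul_sum_highPart_le hx
    have htot := sum_lowPart_add_sum_highPart m₁ x
    rw [hx.1.2] at htot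
    simp only [mul_add, sum_add_distrib, ← sum_mul]
    nlinarith
  rw [pay_self_eq_sub hhigh hx.1.2]
  suffices Mn - v ≤ ∑ k, lowPart m₁ x k * (Mn - uL k jn) by linarith
  refine le_of_mul_le_mul_left ?_ hc0
  calc c * (Mn - v) ≤ (∑ k, lowPart m₁ x k * (γ k + c)) * (Mn - v) :=
        mul_le_mul_of_nonneg_right hmass (sub_nonneg.2 hvM)
    _ ≤ c * ∑ k, lowPart m₁ x k * (Mn - uL k jn) := by
        rw [sum_mul, mul_sum]; exact sum_le_sum fun k _ => hpoint k

lemma pay_le_of_mem_BR_of_le (hc : IsMinExcess m₁ μ jn c)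
    (hhigh : ∀ i : Fin m, m₁ - 1 ≤ (i : ℕ) → uL i jn = Mn) {γ' : Fin m → ℝ} {v : ℝ}
    (hub : ∀ x ∈ simplex m, ∀ j ∈ BR (tuFg m₁ μ jn γ) x, pay uL x j ≤ v)
    (hγγ' : ∀ k : Fin m, (k : ℕ) < m₁ - 1 → γ k ≤ γ' k)
    (hγ' : ∀ k : Fin m, (k : ℕ) < m₁ - 1 → 0 < γ' k) (hvM : v ≤ Mn) {xs' : Fin m → Fin m → ℝ}
    (hxs' : ∀ k : Fin m, (k : ℕ) < m₁ - 1 →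
      xs' k ∈ GammaSet m₁ k ∩ finv m₁ μ jn γ' ∧
        ∀ y ∈ GammaSet m₁ k ∩ finv m₁ μ jn γ', xs' k k ≤ y k)
    (hv : ∀ k : Fin m, (k : ℕ) < m₁ - 1 → pay uL (xs' k) jn ≤ v)
    {x : Fin m → ℝ} (hx : x ∈ simplex m) {j : Fin n} (hj : j ∈ BR (tuFg m₁ μ jn γ') x) :
    pay uL x j ≤ v := by
  by_cases hjn : j = jn
  · subst hjn
    refine hc.pay_le_of_mem_finv hhigh hγ' hvM (fun k hk => ?_) ⟨hx, hj⟩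
    rw [← hc.pay_eq_of_forall_le hhigh hk (hγ' k hk) (hxs' k hk).1 (hxs' k hk).2]
    exact hv k hk
  · exact hub x hx j (mem_BR_tuFg_of_le hγγ' hx.1 hjn hj)

end IsMinExcess

theorem grow_Ig_general {m n : ℕ}
    (uL : Fin m → Fin n → ℝ) (jn : Fin n)
    (m₁ : ℕ) (hm₁m : m₁ ≤ m)
    (Mn : ℝ)
    (hhigh : ∀ i : Fin m, m₁ - 1 ≤ (i : ℕ) → uL i jn = Mn)
    (hlow : ∀ i : Fin m, (i : ℕ) < m₁ - 1 → uL i jn < Mn)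
    (μ : Fin m → Fin n → ℝ) (hμ : IsProperCover uL μ {jn})
    (g : Fin m → ℝ) (hg : ∀ i : Fin m, (i : ℕ) < m₁ - 1 → 0 < g i)
    (xs : Fin m → Fin m → ℝ)
    (hxs : ∀ i : Fin m, (i : ℕ) < m₁ - 1 →
      xs i ∈ GammaSet m₁ i ∩ finv m₁ μ jn g ∧
        ∀ x ∈ GammaSet m₁ i ∩ finv m₁ μ jn g, xs i i ≤ x i)
    (hIg : ({i : Fin m | (i : ℕ) < m₁ - 1 ∧
        SSE uL (tuFg m₁ μ jn g) (xs i) jn}).Nonempty)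
    (i : Fin m) (hi : (i : ℕ) < m₁ - 1)
    (hiI : ¬ SSE uL (tuFg m₁ μ jn g) (xs i) jn) :
    ∃ gstar : ℝ, 0 < gstar ∧
      ∀ xs' : Fin m → Fin m → ℝ,
        (∀ i' : Fin m, (i' : ℕ) < m₁ - 1 →
          xs' i' ∈ GammaSet m₁ i' ∩ finv m₁ μ jn (Function.update g i gstar) ∧
            ∀ x ∈ GammaSet m₁ i' ∩ finv m₁ μ jn (Function.update g i gstar),
              xs' i' i' ≤ x i') →
        {i' : Fin m | (i' : ℕ) < m₁ - 1 ∧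
            SSE uL (tuFg m₁ μ jn (Function.update g i gstar)) (xs' i') jn} =
          {i' : Fin m | (i' : ℕ) < m₁ - 1 ∧
            SSE uL (tuFg m₁ μ jn g) (xs i') jn} ∪ {i} := by
  obtain ⟨i₀, hi₀, hSSE₀⟩ := hIg
  obtain ⟨c, hc⟩ := exists_isMinExcess μ (hμ.exists_ne rfl (single_mem_stdSimplex ℝ i))
    (by omega : m₁ - 1 < m)
  have hc₀ : 0 < c := by linarith [hc.one_le]
  have hval : ∀ k : Fin m, (k : ℕ) < m₁ - 1 →
      pay uL (xs k) jn = Mn - c / (g k + c) * (Mn - uL k jn) := fun k hk =>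
    hc.pay_eq_of_forall_le hhigh hk (hg k hk) (hxs k hk).1 (hxs k hk).2
  set v := pay uL (xs i₀) jn
  have hvM : v < Mn := hc.pay_lt hhigh hlow hi₀ (hg i₀ hi₀) (hxs i₀ hi₀).1
  have hle : ∀ k : Fin m, (k : ℕ) < m₁ - 1 → pay uL (xs k) jn ≤ v := fun k hk =>
    hSSE₀.2.2 _ (hxs k hk).1.1.1 _ (hxs k hk).1.2.2
  have hSSE : ∀ k : Fin m, (k : ℕ) < m₁ - 1 →
      (SSE uL (tuFg m₁ μ jn g) (xs k) jn ↔ v ≤ pay uL (xs k) jn) := fun k hk =>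
    SSE_iff_le_pay hSSE₀.2.2 hSSE₀.1 hSSE₀.2.1 le_rfl (hxs k hk).1.1.1 (hxs k hk).1.2.2
  have hvi : pay uL (xs i) jn < v := not_le.1 fun h => hiI ((hSSE i hi).2 h)
  obtain ⟨gstar, hgi, hgstar⟩ := exists_gt_sub_div_mul_eq hc₀ (hg i hi) (sub_pos.2 (hlow i hi))
    hvM (hval i hi ▸ hvi)
  refine ⟨gstar, (hg i hi).trans hgi, fun xs' hxs' => ?_⟩
  set g' := Function.update g i gstar
  have hgg' : g ≤ g' := le_update_iff.2 ⟨hgi.le, fun _ _ => le_rfl⟩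
  have hg'pos : ∀ k : Fin m, (k : ℕ) < m₁ - 1 → 0 < g' k := fun k hk =>
    (hg k hk).trans_le (hgg' k)
  have hval' : ∀ k : Fin m, (k : ℕ) < m₁ - 1 →
      pay uL (xs' k) jn = Mn - c / (g' k + c) * (Mn - uL k jn) := fun k hk =>
    hc.pay_eq_of_forall_le hhigh hk (hg'pos k hk) (hxs' k hk).1 (hxs' k hk).2
  have hval'i : pay uL (xs' i) jn = v := by simp [hval' i hi, g', hgstar]
  have hval'ne : ∀ k : Fin m, (k : ℕ) < m₁ - 1 → k ≠ i → pay uL (xs' k) jn = pay uL (xs k) jn :=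
    fun k hk hki => by simp [hval' k hk, hval k hk, g', hki]
  have hle' : ∀ k : Fin m, (k : ℕ) < m₁ - 1 → pay uL (xs' k) jn ≤ v := fun k hk => by
    rcases eq_or_ne k i with rfl | hki
    · exact hval'i.le
    · exact hval'ne k hk hki ▸ hle k hk
  have hSSE' : ∀ k : Fin m, (k : ℕ) < m₁ - 1 →
      (SSE uL (tuFg m₁ μ jn g') (xs' k) jn ↔ v ≤ pay uL (xs' k) jn) := fun k hk =>
    SSE_iff_le_pay (fun x hx j hj => hc.pay_le_of_mem_BR_of_le hhigh hSSE₀.2.2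
      (fun k _ => hgg' k) hg'pos hvM.le hxs' hle' hx hj)
      (hxs' i hi).1.1.1 (hxs' i hi).1.2.2 hval'i.ge (hxs' k hk).1.1.1 (hxs' k hk).1.2.2
  ext k
  simp only [Set.mem_ofPred_eq, Set.mem_union, Set.mem_singleton_iff]
  by_cases hk : (k : ℕ) < m₁ - 1
  · rw [hSSE' k hk, hSSE k hk]
    rcases eq_or_ne k i with rfl | hki
    · simp [hval'i, hk]
    · simp [hval'ne k hk hki, hki, hk]
  · simp only [hk, false_and, false_or]
    exact iff_of_false id fun hki => hk (hki ▸ hi)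

/-- if I_g ≠ ∅ and i ∈ [m₁−1] \ I_g, then there is g* > 0 such that, letting
g' = g with its i-th coordinate replaced by g*, I_{g'} = I_g ∪ {i}
(for any choice of critical points, since I_g is independent of that choice). -/
theorem grow_Ig {m n : ℕ}
    (uL : Fin m → Fin n → ℝ) (jn : Fin n)
    (m₁ : ℕ) (hm₁ : 1 < m₁) (hm₁m : m₁ ≤ m)
    (Mn : ℝ)
    (hhigh : ∀ i : Fin m, m₁ - 1 ≤ (i : ℕ) → uL i jn = Mn)
    (hlow : ∀ i : Fin m, (i : ℕ) < m₁ - 1 → uL i jn < Mn)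
    (μ : Fin m → Fin n → ℝ) (hμ : IsProperCover uL μ {jn})
    (g : Fin m → ℝ) (hg : ∀ i : Fin m, (i : ℕ) < m₁ - 1 → 0 < g i)
    (xs : Fin m → Fin m → ℝ)
    (hxs : ∀ i : Fin m, (i : ℕ) < m₁ - 1 →
      xs i ∈ GammaSet m₁ i ∩ finv m₁ μ jn g ∧
        ∀ x ∈ GammaSet m₁ i ∩ finv m₁ μ jn g, xs i i ≤ x i)
    (hIg : ({i : Fin m | (i : ℕ) < m₁ - 1 ∧
        SSE uL (tuFg m₁ μ jn g) (xs i) jn}).Nonempty)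
    (i : Fin m) (hi : (i : ℕ) < m₁ - 1)
    (hiI : ¬ SSE uL (tuFg m₁ μ jn g) (xs i) jn) :
    ∃ gstar : ℝ, 0 < gstar ∧
      ∀ xs' : Fin m → Fin m → ℝ,
        (∀ i' : Fin m, (i' : ℕ) < m₁ - 1 →
          xs' i' ∈ GammaSet m₁ i' ∩ finv m₁ μ jn (Function.update g i gstar) ∧
            ∀ x ∈ GammaSet m₁ i' ∩ finv m₁ μ jn (Function.update g i gstar),
              xs' i' i' ≤ x i') →
        {i' : Fin m | (i' : ℕ) < m₁ - 1 ∧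
            SSE uL (tuFg m₁ μ jn (Function.update g i gstar)) (xs' i') jn} =
          {i' : Fin m | (i' : ℕ) < m₁ - 1 ∧
            SSE uL (tuFg m₁ μ jn g) (xs i') jn} ∪ {i} :=
  grow_Ig_general uL jn m₁ hm₁m Mn hhigh hlow μ hμ g hg xs hxs hIg i hi hiI
end
end

section
/- Let S ⊆ [n] be nonempty with S ≠ [n], and suppose for each j ∈ [n]\S there are b_j ∈ ℝ^m and c_j ∈ ℝ such that for all x ∈ Δ_m: u^L(x,j) ≥ M_S if and only if b_j·x ≤ c_j. Define μ(x,j) = 0 for j ∈ S and μ(x,j) = b_j·x − c_j for j ∈ [n]\S. Then: (1) μ is a cover of S with respect to u^L if and only if there is no x ∈ 𝓜_S with μ(x,j) ≤ 0 for all j ∈ [n]; and (2) if μ is not a cover of S, then no cover of S with respect to u^L exists. -/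
open scoped Classical
open Finset

noncomputable section

/-- The candidate cover μ built from the hyperplanes (b_j, c_j):
μ(x,j) = 0 for j ∈ S, and μ(x,j) = b_j·x − c_j otherwise
(as a matrix; the linear extension agrees on Δ_m). -/
def muBC {m n : ℕ} (S : Set (Fin n)) (b : Fin n → Fin m → ℝ) (c : Fin n → ℝ) :
    Fin m → Fin n → ℝ :=
  fun i j => if j ∈ S then 0 else b j i - c j

/-!
On 𝓜_S the hypothesis on `(b, c)` says exactly that `μ(x, j) ≤ 0` iff the leader gets at least
`M_S` against `j` (for `j ∈ S` both sides hold, as `x` is maximin). So `μ` fails to be a cover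
precisely at a maximin `x` where every `μ(x, j)` is nonpositive, and at such an `x` every follower
response, whatever the follower's payoff, gives the leader at least `M_S`: no cover exists.
-/

section Payoffs

variable {m n : ℕ}

theorem pay_muBC_of_mem (S : Set (Fin n)) (b : Fin n → Fin m → ℝ) (c : Fin n → ℝ)
    (x : Fin m → ℝ) {j : Fin n} (hj : j ∈ S) : pay (muBC S b c) x j = 0 := by
  simp [pay, muBC, hj]

theorem pay_muBC_of_notMem (S : Set (Fin n)) (b : Fin n → Fin m → ℝ) (c : Fin n → ℝ)
    {x : Fin m → ℝ} (hx : x ∈ simplex m) {j : Fin n} (hj : j ∉ S) :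
    pay (muBC S b c) x j = dot (b j) x - c j := by
  have hsum : ∑ i, x i = 1 := hx.2
  simp only [pay, muBC, if_neg hj, dot, mul_sub, sum_sub_distrib, ← sum_mul, hsum, one_mul]
  simp only [mul_comm]

theorem Mval_le_pay_of_mem_argMM {u : Fin m → Fin n → ℝ} {S : Set (Fin n)} {x : Fin m → ℝ}
    (hx : x ∈ argMM u S) {j : Fin n} (hj : j ∈ S) : Mval u S ≤ pay u x j :=
  hx.2 ▸ csInf_le (S.toFinite.image _).bddBelow (Set.mem_image_of_mem _ hj)

theorem BR_nonempty [Nonempty (Fin n)] (μ : Fin m → Fin n → ℝ) (x : Fin m → ℝ) :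
    (BR μ x).Nonempty :=
  Finite.exists_max (pay μ x)

end Payoffs

section Cover

variable {m n : ℕ} {uL μ : Fin m → Fin n → ℝ} {S : Set (Fin n)} {x : Fin m → ℝ}

theorem IsCover.not_Mval_le_pay (hμ : IsCover uL μ S) (hx : x ∈ argMM uL S) {j : Fin n}
    (hj : j ∈ BR μ x) : ¬ Mval uL S ≤ pay uL x j :=
  not_le.mpr (hμ x hx j hj)

theorem not_isCover_of_forall_Mval_le_pay [Nonempty (Fin n)] (hx : x ∈ argMM uL S)
    (hle : ∀ j, Mval uL S ≤ pay uL x j) : ¬ IsCover uL μ S := fun hμ =>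
  have ⟨j, hj⟩ := BR_nonempty μ x
  hμ.not_Mval_le_pay hx hj (hle j)

theorem Mval_le_pay_iff_pay_muBC_nonpos {b : Fin n → Fin m → ℝ} {c : Fin n → ℝ}
    (hbc : ∀ j ∉ S, ∀ x ∈ simplex m, (Mval uL S ≤ pay uL x j ↔ dot (b j) x ≤ c j))
    (hx : x ∈ argMM uL S) (j : Fin n) :
    Mval uL S ≤ pay uL x j ↔ pay (muBC S b c) x j ≤ 0 := by
  by_cases hj : j ∈ S
  · simp only [Mval_le_pay_of_mem_argMM hx hj, pay_muBC_of_mem S b c x hj, le_refl]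
  · rw [hbc j hj x hx.1, pay_muBC_of_notMem S b c hx.1 hj, sub_nonpos]

theorem isCover_muBC_iff {b : Fin n → Fin m → ℝ} {c : Fin n → ℝ} (hS : S.Nonempty)
    (hbc : ∀ j ∉ S, ∀ x ∈ simplex m, (Mval uL S ≤ pay uL x j ↔ dot (b j) x ≤ c j)) :
    IsCover uL (muBC S b c) S ↔ ¬ ∃ x ∈ argMM uL S, ∀ j, pay (muBC S b c) x j ≤ 0 := by
  constructor
  · rintro hμ ⟨x, hx, hnonpos⟩
    obtain ⟨j₀, hj₀⟩ := hS
    have hj₀BR : j₀ ∈ BR (muBC S b c) x := fun j => pay_muBC_of_mem S b c x hj₀ ▸ hnonpos j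
    exact hμ.not_Mval_le_pay hx hj₀BR (Mval_le_pay_of_mem_argMM hx hj₀)
  · intro hne x hx j hj
    obtain ⟨j', hj'⟩ : ∃ j', 0 < pay (muBC S b c) x j' := by
      push Not at hne
      exact hne x hx
    have hpos : 0 < pay (muBC S b c) x j := hj'.trans_le (hj j')
    exact not_le.mp fun hle => hpos.not_ge ((Mval_le_pay_iff_pay_muBC_nonpos hbc hx j).mp hle)

end Cover

theorem muBC_cover_characterization_general {m n : ℕ}
    (uL : Fin m → Fin n → ℝ)
    (S : Set (Fin n)) (hS : S.Nonempty)
    (b : Fin n → Fin m → ℝ) (c : Fin n → ℝ)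
    (hbc : ∀ j ∉ S, ∀ x ∈ simplex m,
      (Mval uL S ≤ pay uL x j ↔ dot (b j) x ≤ c j)) :
    (IsCover uL (muBC S b c) S ↔
      ¬ ∃ x ∈ argMM uL S, ∀ j : Fin n, pay (muBC S b c) x j ≤ 0) ∧
    (¬ IsCover uL (muBC S b c) S →
      ∀ μ' : Fin m → Fin n → ℝ, ¬ IsCover uL μ' S) := by
  refine ⟨isCover_muBC_iff hS hbc, fun hnc μ' => ?_⟩
  have : Nonempty (Fin n) := hS.to_subtype.map Subtype.val
  obtain ⟨x, hx, hnonpos⟩ := not_not.mp ((isCover_muBC_iff hS hbc).not.mp hnc)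
  exact not_isCover_of_forall_Mval_le_pay hx
    fun j => (Mval_le_pay_iff_pay_muBC_nonpos hbc hx j).mpr (hnonpos j)

/-- (1) μ is a cover of S iff there is no x ∈ 𝓜_S with μ(x,j) ≤ 0 for all j;
(2) if μ is not a cover of S, then no cover of S exists at all. -/
theorem muBC_cover_characterization {m n : ℕ} (hm : 0 < m) (hn : 0 < n)
    (uL : Fin m → Fin n → ℝ)
    (S : Set (Fin n)) (hS : S.Nonempty) (hSne : S ≠ Set.univ)
    (b : Fin n → Fin m → ℝ) (c : Fin n → ℝ)
    (hbc : ∀ j ∉ S, ∀ x ∈ simplex m,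
      (Mval uL S ≤ pay uL x j ↔ dot (b j) x ≤ c j)) :
    (IsCover uL (muBC S b c) S ↔
      ¬ ∃ x ∈ argMM uL S, ∀ j : Fin n, pay (muBC S b c) x j ≤ 0) ∧
    (¬ IsCover uL (muBC S b c) S →
      ∀ μ' : Fin m → Fin n → ℝ, ¬ IsCover uL μ' S) :=
  muBC_cover_characterization_general uL S hS b c hbc
end
end
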